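/- Let ℋ be a complex Hilbert space, H a bounded non-negative self-adjoint operator on ℋ, 𝔥 ⊆ ℋ a closed subspace with orthogonal projection P onto 𝔥, and K the compression of H to 𝔥. Then for every s ∈ ℝ the operator I + isH is invertible, and for every f ∈ 𝔥 and every t₀ > 0, (P (I + i(t/n)H)^{-1} P)^n f → exp(−itK) f as n → ∞, uniformly in t ∈ [0, t₀]. -/

import Mathlib

open Filter Topology NormedSpace

set_option maxHeartbeats 1000000
set_option synthInstance.maxHeartbeats 400000

private lemma zeno_norm_term_le {𝔸 : Type*} [NormedRing 𝔸] [NormedAlgebra ℂ 𝔸]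
    (h1 : ‖(1:𝔸)‖ ≤ 1) (x : 𝔸) (n : ℕ) :
    ‖(((Nat.factorial n) : ℂ))⁻¹ • x ^ n‖ ≤ ‖x‖ ^ n / (Nat.factorial n) := by
  rw [norm_smul, norm_inv, Complex.norm_natCast, div_eq_inv_mul]
  apply mul_le_mul_of_nonneg_left _ (by positivity)
  rcases Nat.eq_zero_or_pos n with h | h
  · simpa [h] using h1
  · exact norm_pow_le' x h

private lemma zeno_norm_exp_le {𝔸 : Type*} [NormedRing 𝔸] [NormedAlgebra ℂ 𝔸]
    [CompleteSpace 𝔸] (h1 : ‖(1:𝔸)‖ ≤ 1) (x : 𝔸) :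
    ‖exp x‖ ≤ Real.exp ‖x‖ := by
  have hre : Real.exp ‖x‖ = ∑' n : ℕ, ‖x‖ ^ n / (Nat.factorial n) := by
    rw [Real.exp_eq_exp_ℝ, exp_eq_tsum_div]
  rw [exp_eq_tsum ℂ, hre]
  refine le_trans (norm_tsum_le_tsum_norm (norm_expSeries_summable' x)) ?_
  exact Summable.tsum_le_tsum (zeno_norm_term_le h1 x) (norm_expSeries_summable' x)
    (Real.summable_pow_div_factorial ‖x‖)

private lemma zeno_norm_exp_sub_le {𝔸 : Type*} [NormedRing 𝔸] [NormedAlgebra ℂ 𝔸]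
    [CompleteSpace 𝔸] (x : 𝔸) :
    ‖exp x - 1 - x‖ ≤ ‖x‖ ^ 2 * Real.exp ‖x‖ := by
  have hs : Summable (fun n : ℕ => (((Nat.factorial n) : ℂ))⁻¹ • x ^ n) := expSeries_summable' x
  have hsplit : (∑ i ∈ Finset.range 2, (((Nat.factorial i) : ℂ))⁻¹ • x ^ i) +
      (∑' n : ℕ, (((Nat.factorial (n+2)) : ℂ))⁻¹ • x ^ (n+2)) = exp x := by
    rw [exp_eq_tsum ℂ]
    exact Summable.sum_add_tsum_nat_add 2 hs
  have h01 : (∑ i ∈ Finset.range 2, (((Nat.factorial i) : ℂ))⁻¹ • x ^ i) = 1 + x := by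
    simp [Finset.sum_range_succ]
  have hmaj : ∀ n : ℕ, ‖(((Nat.factorial (n+2)) : ℂ))⁻¹ • x ^ (n+2)‖ ≤ ‖x‖ ^ 2 * (‖x‖ ^ n / (Nat.factorial n)) := by
    intro n
    rw [norm_smul, norm_inv, Complex.norm_natCast]
    calc ((Nat.factorial (n+2)) : ℝ)⁻¹ * ‖x ^ (n+2)‖ ≤ ((Nat.factorial n) : ℝ)⁻¹ * ‖x‖ ^ (n+2) := by
          apply mul_le_mul
          · apply inv_anti₀ (by positivity)
            exact_mod_cast Nat.factorial_le (by omega)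
          · exact norm_pow_le' x (by omega)
          · positivity
          · positivity
      _ = ‖x‖ ^ 2 * (‖x‖ ^ n / (Nat.factorial n)) := by ring
  have hmajsum : Summable (fun n : ℕ => ‖x‖ ^ 2 * (‖x‖ ^ n / (Nat.factorial n))) :=
    (Real.summable_pow_div_factorial ‖x‖).mul_left _
  have hnorms : Summable (fun n : ℕ => ‖(((Nat.factorial (n+2)) : ℂ))⁻¹ • x ^ (n+2)‖) :=
    Summable.of_nonneg_of_le (fun n => norm_nonneg _) hmaj hmajsum
  have heq : exp x - 1 - x = ∑' n : ℕ, (((Nat.factorial (n+2)) : ℂ))⁻¹ • x ^ (n+2) := by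
    rw [← hsplit, h01]; abel
  rw [heq]
  calc ‖∑' n : ℕ, (((Nat.factorial (n+2)) : ℂ))⁻¹ • x ^ (n+2)‖
      ≤ ∑' n : ℕ, ‖(((Nat.factorial (n+2)) : ℂ))⁻¹ • x ^ (n+2)‖ := norm_tsum_le_tsum_norm hnorms
    _ ≤ ∑' n : ℕ, ‖x‖ ^ 2 * (‖x‖ ^ n / (Nat.factorial n)) := Summable.tsum_le_tsum hmaj hnorms hmajsum
    _ = ‖x‖ ^ 2 * Real.exp ‖x‖ := by
        rw [tsum_mul_left, Real.exp_eq_exp_ℝ, exp_eq_tsum_div]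

private lemma zeno_pow_sub_pow {A : Type*} [NormedRing A] {a b : A} {M : ℝ}
    (ha : ‖a‖ ≤ M) (hb : ‖b‖ ≤ M) (n : ℕ) :
    ‖a ^ (n+1) - b ^ (n+1)‖ ≤ ((n:ℝ)+1) * M ^ n * ‖a - b‖ := by
  induction n with
  | zero => simpa using le_refl _
  | succ m ih =>
    have hM : 0 ≤ M := le_trans (norm_nonneg a) ha
    have key : a ^ (m+1+1) - b ^ (m+1+1) = a * (a^(m+1) - b^(m+1)) + (a - b) * b^(m+1) := by
      rw [pow_succ' a (m+1), pow_succ' b (m+1), mul_sub, sub_mul]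
      abel
    calc ‖a ^ (m+1+1) - b ^ (m+1+1)‖
        ≤ ‖a * (a^(m+1) - b^(m+1))‖ + ‖(a-b) * b^(m+1)‖ := by
          rw [key]; exact norm_add_le _ _
      _ ≤ ‖a‖ * ‖a^(m+1) - b^(m+1)‖ + ‖a-b‖ * ‖b^(m+1)‖ :=
          add_le_add (norm_mul_le _ _) (norm_mul_le _ _)
      _ ≤ M * (((m:ℝ)+1) * M^m * ‖a-b‖) + ‖a-b‖ * M^(m+1) := by
          apply add_le_add
          · exact mul_le_mul ha ih (norm_nonneg _) hM
          · apply mul_le_mul_of_nonneg_left _ (norm_nonneg _)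
            exact le_trans (norm_pow_le' b (Nat.succ_pos m)) (pow_le_pow_left₀ (norm_nonneg b) hb _)
      _ = (((m+1:ℕ):ℝ)+1) * M^(m+1) * ‖a-b‖ := by push_cast; ring

private lemma zeno_isUnit {ℋ : Type*} [NormedAddCommGroup ℋ] [InnerProductSpace ℂ ℋ]
    [CompleteSpace ℋ] (Hop : ℋ →L[ℂ] ℋ) (hsa : IsSelfAdjoint Hop) (s : ℝ) :
    IsUnit (1 + (Complex.I * (s : ℂ)) • Hop) := by
  rcases eq_or_ne s 0 with hs | hs
  · simp [hs]
  by_contra h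
  have hc : (Complex.I * (s : ℂ)) ≠ 0 := by
    simp [Complex.I_ne_zero, Complex.ofReal_eq_zero, hs]
  have hcu : IsUnit (Complex.I * (s : ℂ)) := isUnit_iff_ne_zero.2 hc
  have hmem : (-1 : ℂ) ∈ spectrum ℂ ((Complex.I * (s : ℂ)) • Hop) := by
    rw [spectrum.mem_iff]
    intro hu
    apply h
    have : (algebraMap ℂ (ℋ →L[ℂ] ℋ)) (-1) - (Complex.I * (s : ℂ)) • Hop
        = -(1 + (Complex.I * (s : ℂ)) • Hop) := by
      rw [Algebra.algebraMap_eq_smul_one]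
      simp only [neg_smul, one_smul]
      abel
    rw [this] at hu
    simpa using hu.neg
  have h3 : (-(Complex.I * (s:ℂ))⁻¹ : ℂ) ∈ spectrum ℂ Hop := by
    rw [← spectrum.smul_mem_smul_iff (r := hcu.unit) (a := Hop)]
    have e1 : hcu.unit • (-(Complex.I * (s:ℂ))⁻¹ : ℂ) = -1 := by
      rw [Units.smul_def, hcu.unit_spec, smul_eq_mul]
      field_simp
      rw [div_self (Complex.ofReal_ne_zero.mpr hs)]
    have e2 : hcu.unit • Hop = (Complex.I * (s:ℂ)) • Hop := by
      rw [Units.smul_def, hcu.unit_spec]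
    rw [e1, e2]
    exact hmem
  have hzre := hsa.mem_spectrum_eq_re h3
  have heq : (-(Complex.I * (s:ℂ))⁻¹ : ℂ) = Complex.I * ((s:ℂ))⁻¹ := by
    rw [mul_inv, Complex.inv_I]; ring
  rw [heq] at hzre
  have him := congrArg Complex.im hzre
  rw [← Complex.ofReal_inv] at him
  simp [Complex.mul_im] at him
  exact hs him

private lemma zeno_lower_bound {ℋ : Type*} [NormedAddCommGroup ℋ] [InnerProductSpace ℂ ℋ]
    [CompleteSpace ℋ] (Hop : ℋ →L[ℂ] ℋ) (hsa : IsSelfAdjoint Hop) (s : ℝ) (g : ℋ) :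
    ‖g‖ ≤ ‖g + (Complex.I * (s : ℂ)) • Hop g‖ := by
  have him : (inner ℂ g (Hop g) : ℂ).im = 0 := by
    rw [← Complex.conj_eq_iff_im]
    rw [inner_conj_symm]
    exact hsa.isSymmetric g g
  have hre : (RCLike.re (inner ℂ g ((Complex.I * (s : ℂ)) • Hop g) : ℂ) : ℝ) = 0 := by
    rw [inner_smul_right]
    simp [Complex.mul_re, Complex.mul_im, him]
  have hsq := norm_add_sq (𝕜 := ℂ) g ((Complex.I * (s : ℂ)) • Hop g)
  rw [hre] at hsq
  nlinarith [norm_nonneg (g + (Complex.I * (s : ℂ)) • Hop g), norm_nonneg g,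
    sq_nonneg ‖(Complex.I * (s : ℂ)) • Hop g‖]

theorem zeno_product_formula_resolvent
    {ℋ : Type*} [NormedAddCommGroup ℋ] [InnerProductSpace ℂ ℋ] [CompleteSpace ℋ]
    {𝔥 : Type*} [NormedAddCommGroup 𝔥] [InnerProductSpace ℂ 𝔥] [CompleteSpace 𝔥]
    (J : 𝔥 →ₗᵢ[ℂ] ℋ) (P : ℋ →L[ℂ] 𝔥)
    (hP : ∀ (g : ℋ) (f : 𝔥), (inner ℂ (P g) f : ℂ) = inner ℂ g (J f))
    (Hop : ℋ →L[ℂ] ℋ) (hsa : IsSelfAdjoint Hop)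
    (hpos : ∀ g : ℋ, 0 ≤ (inner ℂ (Hop g) g : ℂ).re)
    (K : 𝔥 →L[ℂ] 𝔥) (hK : ∀ f : 𝔥, K f = P (Hop (J f)))
    (G : ℝ → (𝔥 →L[ℂ] 𝔥))
    (hG : ∀ (s : ℝ) (f : 𝔥),
      G s f = P (Ring.inverse (1 + (Complex.I * (s : ℂ)) • Hop) (J f))) :
    (∀ s : ℝ, IsUnit (1 + (Complex.I * (s : ℂ)) • Hop)) ∧
    ∀ f : 𝔥, ∀ t₀ : ℝ, 0 < t₀ →
      TendstoUniformlyOn (fun (n : ℕ) (t : ℝ) => ((G (t / n)) ^ n) f)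
        (fun t : ℝ => NormedSpace.exp ((-(Complex.I * (t : ℂ))) • K) f)
        atTop (Set.Icc 0 t₀) := by
  set Rr : ℝ → (ℋ →L[ℂ] ℋ) := fun s => Ring.inverse (1 + (Complex.I * (s : ℂ)) • Hop)
    with hRdef
  have hG' : ∀ (s : ℝ) (g : 𝔥), G s g = P (Rr s (J g)) := fun s g => hG s g
  have hR2 : ∀ (s : ℝ) (x : ℋ), Rr s x + (Complex.I * (s : ℂ)) • Hop (Rr s x) = x := by
    intro s x
    have h := DFunLike.congr_fun (Ring.mul_inverse_cancel _ (zeno_isUnit Hop hsa s)) x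
    simpa [ContinuousLinearMap.mul_apply, ContinuousLinearMap.add_apply,
      ContinuousLinearMap.one_apply, ContinuousLinearMap.smul_apply, hRdef] using h
  have hRpt : ∀ (s : ℝ) (x : ℋ), Rr s x = x - (Complex.I * (s : ℂ)) • Hop (Rr s x) := by
    intro s x
    exact eq_sub_of_add_eq (hR2 s x)
  have hRnorm : ∀ (s : ℝ) (x : ℋ), ‖Rr s x‖ ≤ ‖x‖ := by
    intro s x
    have h := zeno_lower_bound Hop hsa s (Rr s x)
    rwa [hR2 s x] at h
  have hPJ : ∀ g : 𝔥, P (J g) = g := by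
    intro g
    apply ext_inner_right ℂ
    intro v
    rw [hP, LinearIsometry.inner_map_map]
  have hGpt : ∀ (s : ℝ) (g : 𝔥), G s g = g - (Complex.I * (s : ℂ)) • K g
      - ((s : ℂ)^2) • P (Hop (Hop (Rr s (J g)))) := by
    intro s g
    have e1 : G s g = g - (Complex.I * (s : ℂ)) • P (Hop (Rr s (J g))) := by
      rw [hG']
      conv_lhs => rw [hRpt s (J g)]
      rw [map_sub, map_smul, hPJ]
    have e2 : P (Hop (Rr s (J g)))
        = K g - (Complex.I * (s : ℂ)) • P (Hop (Hop (Rr s (J g)))) := by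
      conv_lhs => rw [hRpt s (J g)]
      rw [map_sub, map_smul, map_sub, map_smul, hK]
    rw [e1, e2, smul_sub, smul_smul]
    have hc2 : (Complex.I * (s : ℂ)) * (Complex.I * (s : ℂ)) = -((s : ℂ)^2) := by
      rw [mul_mul_mul_comm, Complex.I_mul_I]
      ring
    rw [hc2, neg_smul]
    abel
  refine ⟨fun s => zeno_isUnit Hop hsa s, ?_⟩
  -- constants
  set CH : ℝ := ‖P‖ * ‖Hop‖ * ‖Hop‖ with hCHdef
  set CK : ℝ := ‖K‖ with hCKdef
  have hCH0 : 0 ≤ CH := by rw [hCHdef]; positivity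
  have hCK0 : 0 ≤ CK := norm_nonneg _
  have one_le : ‖(1 : 𝔥 →L[ℂ] 𝔥)‖ ≤ 1 := by
    rw [ContinuousLinearMap.one_def]
    exact ContinuousLinearMap.norm_id_le
  have hcnorm : ∀ s : ℝ, ‖Complex.I * (s : ℂ)‖ = |s| := by
    intro s
    rw [norm_mul, Complex.norm_I, one_mul, Complex.norm_real, Real.norm_eq_abs]
  have hX : ∀ (s : ℝ) (g : 𝔥), ‖P (Hop (Hop (Rr s (J g))))‖ ≤ CH * ‖g‖ := by
    intro s g
    have h1 : ‖Rr s (J g)‖ ≤ ‖g‖ := by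
      calc ‖Rr s (J g)‖ ≤ ‖J g‖ := hRnorm s (J g)
        _ = ‖g‖ := J.norm_map g
    calc ‖P (Hop (Hop (Rr s (J g))))‖ ≤ ‖P‖ * ‖Hop (Hop (Rr s (J g)))‖ :=
          P.le_opNorm _
      _ ≤ ‖P‖ * (‖Hop‖ * ‖Hop (Rr s (J g))‖) := by
          apply mul_le_mul_of_nonneg_left (Hop.le_opNorm _) (norm_nonneg P)
      _ ≤ ‖P‖ * (‖Hop‖ * (‖Hop‖ * ‖Rr s (J g)‖)) := by
          apply mul_le_mul_of_nonneg_left _ (norm_nonneg P)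
          exact mul_le_mul_of_nonneg_left (Hop.le_opNorm _) (norm_nonneg Hop)
      _ ≤ ‖P‖ * (‖Hop‖ * (‖Hop‖ * ‖g‖)) := by
          apply mul_le_mul_of_nonneg_left _ (norm_nonneg P)
          apply mul_le_mul_of_nonneg_left _ (norm_nonneg Hop)
          exact mul_le_mul_of_nonneg_left h1 (norm_nonneg Hop)
      _ = CH * ‖g‖ := by rw [hCHdef]; ring
  have hs2norm : ∀ s : ℝ, ‖((s : ℂ)^2)‖ = s^2 := by
    intro s
    rw [norm_pow, Complex.norm_real, Real.norm_eq_abs, sq_abs]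
  have hDop : ∀ s : ℝ, ‖G s - (1 - (Complex.I * (s : ℂ)) • K)‖ ≤ s^2 * CH := by
    intro s
    apply ContinuousLinearMap.opNorm_le_bound _ (by positivity)
    intro g
    have e : (G s - (1 - (Complex.I * (s : ℂ)) • K)) g
        = -(((s : ℂ)^2) • P (Hop (Hop (Rr s (J g))))) := by
      simp only [ContinuousLinearMap.sub_apply, ContinuousLinearMap.smul_apply,
        ContinuousLinearMap.one_apply]
      rw [hGpt s g]
      abel
    rw [e, norm_neg, norm_smul, hs2norm]
    calc s^2 * ‖P (Hop (Hop (Rr s (J g))))‖ ≤ s^2 * (CH * ‖g‖) := by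
          exact mul_le_mul_of_nonneg_left (hX s g) (sq_nonneg s)
      _ = s^2 * CH * ‖g‖ := by ring
  have hGnorm : ∀ s : ℝ, ‖G s‖ ≤ 1 + |s| * CK + s^2 * CH := by
    intro s
    have e : G s = (1 - (Complex.I * (s : ℂ)) • K)
        + (G s - (1 - (Complex.I * (s : ℂ)) • K)) := by abel
    calc ‖G s‖ ≤ ‖1 - (Complex.I * (s : ℂ)) • K‖
          + ‖G s - (1 - (Complex.I * (s : ℂ)) • K)‖ := by
          conv_lhs => rw [e]
          exact norm_add_le _ _
      _ ≤ (1 + |s| * CK) + s^2 * CH := by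
          apply add_le_add _ (hDop s)
          calc ‖1 - (Complex.I * (s : ℂ)) • K‖
              ≤ ‖(1 : 𝔥 →L[ℂ] 𝔥)‖ + ‖(Complex.I * (s : ℂ)) • K‖ := norm_sub_le _ _
            _ ≤ 1 + |s| * CK := by
                apply add_le_add one_le
                rw [norm_smul, hcnorm, hCKdef]
      _ = 1 + |s| * CK + s^2 * CH := by ring
  -- part 2
  intro f t₀ ht₀
  rw [Metric.tendstoUniformlyOn_iff]
  intro ε hε
  set M : ℝ := Real.exp (t₀ * CK + t₀^2 * CH) with hMdef
  have hM1 : 1 ≤ M := Real.one_le_exp (by positivity)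
  have hM0 : 0 ≤ M := le_trans zero_le_one hM1
  set CB : ℝ := CH + CK^2 * M with hCBdef
  have hCB0 : 0 ≤ CB := by rw [hCBdef]; positivity
  set Cfin : ℝ := M * CB * t₀^2 * ‖f‖ with hCfindef
  have hCfin0 : 0 ≤ Cfin := by rw [hCfindef]; positivity
  rw [eventually_atTop]
  refine ⟨⌈Cfin / ε⌉₊ + 1, ?_⟩
  intro n hn
  intro t ht
  obtain ⟨m, rfl⟩ : ∃ m, n = m + 1 := ⟨n - 1, by omega⟩
  set n := m + 1 with hndef
  have hn1 : 1 ≤ n := by omega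
  have hnR : (1 : ℝ) ≤ (n : ℝ) := by exact_mod_cast hn1
  have hn0 : (0 : ℝ) < (n : ℝ) := by linarith
  set s : ℝ := t / (n : ℝ) with hsdef
  have hs0 : 0 ≤ s := div_nonneg ht.1 hn0.le
  have hst : s ≤ t₀ := le_trans (div_le_self ht.1 hnR) ht.2
  have hts : (n : ℝ) * s = t := by
    rw [hsdef]
    field_simp
  set x : 𝔥 →L[ℂ] 𝔥 := (-(Complex.I * (s : ℂ))) • K with hxdef
  have hxnorm : ‖x‖ = s * CK := by
    rw [hxdef, norm_smul, norm_neg, hcnorm, abs_of_nonneg hs0, hCKdef]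
  have hox : (1 : 𝔥 →L[ℂ] 𝔥) - (Complex.I * (s : ℂ)) • K = 1 + x := by
    rw [hxdef, neg_smul]
    abel
  set A : 𝔥 →L[ℂ] 𝔥 := G s with hAdef
  set B : 𝔥 →L[ℂ] 𝔥 := NormedSpace.exp x with hBdef
  set Mn : ℝ := Real.exp (s * CK + s^2 * CH) with hMndef
  have hMn1 : 1 ≤ Mn := Real.one_le_exp (by positivity)
  have hAnorm : ‖A‖ ≤ Mn := by
    have h := hGnorm s
    rw [abs_of_nonneg hs0] at h
    refine le_trans h ?_
    rw [hMndef]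
    have := Real.add_one_le_exp (s * CK + s^2 * CH)
    linarith
  have hexple : Real.exp (s * CK) ≤ M := by
    rw [hMdef]
    apply Real.exp_le_exp.2
    have h1 : s * CK ≤ t₀ * CK := mul_le_mul_of_nonneg_right hst hCK0
    nlinarith [sq_nonneg t₀]
  have hBnorm : ‖B‖ ≤ Mn := by
    rw [hBdef]
    refine le_trans (zeno_norm_exp_le one_le x) ?_
    rw [hxnorm, hMndef]
    apply Real.exp_le_exp.2
    nlinarith [sq_nonneg s]
  have hMnpow : Mn ^ m ≤ M := by
    calc Mn ^ m ≤ Mn ^ n := pow_le_pow_right₀ hMn1 (by omega)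
      _ = Real.exp ((n : ℝ) * (s * CK + s^2 * CH)) := by
          rw [hMndef, ← Real.exp_nat_mul]
      _ ≤ M := by
          rw [hMdef]
          apply Real.exp_le_exp.2
          have e : (n : ℝ) * (s * CK + s^2 * CH) = t * CK + (t * s) * CH := by
            rw [← hts]; ring
          rw [e]
          have h1 : t * CK ≤ t₀ * CK := mul_le_mul_of_nonneg_right ht.2 hCK0
          have h2 : t * s ≤ t₀ * t₀ := mul_le_mul ht.2 hst hs0 ht₀.le
          nlinarith
  have hAB : ‖A - B‖ ≤ s^2 * CB := by
    have h1 : ‖A - (1 + x)‖ ≤ s^2 * CH := by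
      rw [← hox, hAdef]
      exact hDop s
    have h2 : ‖B - (1 + x)‖ ≤ s^2 * (CK^2 * M) := by
      have h := zeno_norm_exp_sub_le x
      have e : B - (1 + x) = NormedSpace.exp x - 1 - x := by
        rw [hBdef]; abel
      rw [e]
      refine le_trans h ?_
      rw [hxnorm]
      calc (s * CK)^2 * Real.exp (s * CK) ≤ (s * CK)^2 * M := by
            apply mul_le_mul_of_nonneg_left hexple (sq_nonneg _)
        _ = s^2 * (CK^2 * M) := by ring
    have e : A - B = (A - (1 + x)) - (B - (1 + x)) := by abel
    calc ‖A - B‖ ≤ ‖A - (1 + x)‖ + ‖B - (1 + x)‖ := by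
          rw [e]; exact norm_sub_le _ _
      _ ≤ s^2 * CH + s^2 * (CK^2 * M) := add_le_add h1 h2
      _ = s^2 * CB := by rw [hCBdef]; ring
  have hpow : ‖A ^ n - B ^ n‖ ≤ (n : ℝ) * Mn ^ m * ‖A - B‖ := by
    have h := zeno_pow_sub_pow hAnorm hBnorm m
    rw [hndef]
    push_cast
    exact h
  have hBpow : B ^ n = NormedSpace.exp ((-(Complex.I * (t : ℂ))) • K) := by
    let +nondep : NormedAlgebra ℚ (𝔥 →L[ℂ] 𝔥) := .restrictScalars ℚ ℂ (𝔥 →L[ℂ] 𝔥)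
    rw [hBdef, ← NormedSpace.exp_nsmul]
    congr 1
    rw [← Nat.cast_smul_eq_nsmul ℂ n x, hxdef, smul_smul]
    congr 1
    have hnC : ((n : ℕ) : ℂ) ≠ 0 := Nat.cast_ne_zero.mpr (by omega)
    rw [hsdef, hndef]
    push_cast
    have hmC : ((m : ℂ) + 1) ≠ 0 := Nat.cast_add_one_ne_zero m
    have key : ((m : ℂ) + 1) * ((t : ℂ) / ((m : ℂ) + 1)) = (t : ℂ) := by
      field_simp
    linear_combination (-Complex.I) * key
  have ht2 : t^2 ≤ t₀^2 := by nlinarith [ht.1, ht.2]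
  have hfinal : ‖A ^ n - B ^ n‖ * ‖f‖ ≤ Cfin / n := by
    have hns : (n : ℝ) * s^2 = t^2 / n := by
      rw [hsdef, div_pow]
      field_simp
    have hb1 : ‖A ^ n - B ^ n‖ ≤ M * CB * (t^2 / n) := by
      refine le_trans hpow ?_
      calc (n : ℝ) * Mn ^ m * ‖A - B‖ ≤ (n : ℝ) * M * (s^2 * CB) := by
            apply mul_le_mul (mul_le_mul_of_nonneg_left hMnpow hn0.le) hAB (norm_nonneg _)
            positivity
        _ = M * CB * ((n : ℝ) * s^2) := by ring
        _ = M * CB * (t^2 / n) := by rw [hns]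
    calc ‖A ^ n - B ^ n‖ * ‖f‖ ≤ (M * CB * (t^2 / n)) * ‖f‖ :=
          mul_le_mul_of_nonneg_right hb1 (norm_nonneg f)
      _ ≤ (M * CB * (t₀^2 / n)) * ‖f‖ := by gcongr
      _ = Cfin / n := by rw [hCfindef]; ring
  have hlt : Cfin / n < ε := by
    rw [div_lt_iff₀ hn0]
    have h2 : (⌈Cfin / ε⌉₊ : ℝ) < (n : ℝ) := by
      exact_mod_cast Nat.lt_of_lt_of_le (Nat.lt_succ_self _) hn
    have h1 : Cfin / ε < (n : ℝ) := lt_of_le_of_lt (Nat.le_ceil _) h2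
    calc Cfin = (Cfin / ε) * ε := by field_simp
      _ < (n : ℝ) * ε := mul_lt_mul_of_pos_right h1 hε
      _ = ε * n := mul_comm _ _
  calc dist (NormedSpace.exp ((-(Complex.I * (t : ℂ))) • K) f) ((A ^ n) f)
      = ‖(B ^ n) f - (A ^ n) f‖ := by rw [dist_eq_norm, hBpow]
    _ = ‖(B ^ n - A ^ n) f‖ := by rw [ContinuousLinearMap.sub_apply]
    _ ≤ ‖B ^ n - A ^ n‖ * ‖f‖ := ContinuousLinearMap.le_opNorm _ _
    _ = ‖A ^ n - B ^ n‖ * ‖f‖ := by rw [norm_sub_rev]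
    _ ≤ Cfin / n := hfinal
    _ < ε := hlt
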